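/- Let Θ be a finite nonempty set, π ∈ Δ(Θ), and K ≥ 1. For θ = (θ^1,…,θ^K) ∈ Θ^K drawn i.i.d. from π (i.e., under the product weight Π_{k=1}^K π(θ^k) on Θ^K), the expected total variation distance between π and the empirical distribution satisfies Σ_{θ∈Θ^K} (Π_k π(θ^k))·‖π − marg θ‖ ≤ (1/(2√K))·Σ_{θ'∈Θ} √(π(θ')·(1 − π(θ'))). -/

import Mathlib

open Finset

/-- `p` is a probability vector on the finite set `Z`. -/
def IsProbVec {Z : Type*} [Fintype Z] (p : Z → ℝ) : Prop :=
  (∀ z, 0 ≤ p z) ∧ ∑ z, p z = 1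

/-- Total variation distance `‖p − q‖ = (1/2)·Σ_z |p z − q z|`. -/
noncomputable def tv {Z : Type*} [Fintype Z] (p q : Z → ℝ) : ℝ :=
  (∑ z, |p z - q z|) / 2

/-- Empirical distribution of a type vector: `(marg θ)(θ') = |{k : θ^k = θ'}|/K`. -/
noncomputable def marg {Θ : Type*} [Fintype Θ] [DecidableEq Θ] (K : ℕ)
    (θv : Fin K → Θ) : Θ → ℝ :=
  fun θ' => ((Finset.univ.filter (fun k => θv k = θ')).card : ℝ) / K

/-!
Write `S = ∑ₖ (𝟙[θᵏ = θ'] - π θ')`, so that `|π θ' - (marg θ)(θ')| = |S| / K`. The summands are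
independent, centred, and each has variance `π θ' (1 - π θ')`, so `E[S²] = K π θ' (1 - π θ')`;
Cauchy–Schwarz `E|S| ≤ √E[S²]` then bounds each coordinate of the expected distance by
`√(π θ' (1 - π θ')) / √K`.
-/

lemma sum_mul_abs_le_sqrt_sum_mul_sq {ι : Type*} (s : Finset ι) {w f : ι → ℝ}
    (hw : ∀ i ∈ s, 0 ≤ w i) (hw1 : ∑ i ∈ s, w i = 1) :
    ∑ i ∈ s, w i * |f i| ≤ √(∑ i ∈ s, w i * f i ^ 2) := by
  refine Real.le_sqrt_of_sq_le ?_
  calc (∑ i ∈ s, w i * |f i|) ^ 2 ≤ (∑ i ∈ s, w i) * ∑ i ∈ s, w i * f i ^ 2 :=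
        sum_sq_le_sum_mul_sum_of_sq_le_mul s hw
          (fun i hi => mul_nonneg (hw i hi) (sq_nonneg _))
          (fun i _ => by rw [mul_pow, sq_abs, sq, mul_assoc])
    _ = ∑ i ∈ s, w i * f i ^ 2 := by rw [hw1, one_mul]

section ProductWeight

variable {ι α : Type*} [Fintype ι] [DecidableEq ι] [Fintype α] {π : α → ℝ}

lemma sum_prod_weight_mul_prod (π : α → ℝ) (f : ι → α → ℝ) :
    ∑ x : ι → α, (∏ i, π (x i)) * ∏ i, f i (x i) = ∏ i, ∑ a, π a * f i a := by
  simp only [Fintype.prod_sum, prod_mul_distrib]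

lemma sum_prod_weight (hπ : ∑ a, π a = 1) : ∑ x : ι → α, ∏ i, π (x i) = 1 := by
  simp [← Fintype.prod_sum, hπ]

lemma sum_prod_weight_mul_apply (hπ : ∑ a, π a = 1) (k : ι) (f : α → ℝ) :
    ∑ x : ι → α, (∏ i, π (x i)) * f (x k) = ∑ a, π a * f a := by
  have h := sum_prod_weight_mul_prod π (fun i a => if i = k then f a else 1)
  simpa [mul_ite, apply_ite (fun t : ℝ => ∑ a, t), hπ] using h

lemma sum_prod_weight_mul_apply_mul_apply (hπ : ∑ a, π a = 1) {k l : ι} (hkl : k ≠ l)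
    (f g : α → ℝ) :
    ∑ x : ι → α, (∏ i, π (x i)) * (f (x k) * g (x l)) =
      (∑ a, π a * f a) * ∑ a, π a * g a := by
  have h := sum_prod_weight_mul_prod π
    (fun i a => if i = k then f a else if i = l then g a else 1)
  simpa [mul_ite, prod_ite, filter_eq', hπ, hkl, hkl.symm] using h

/-- Cross terms vanish by independence, so only the `card ι` diagonal terms survive. -/
lemma sum_prod_weight_mul_sum_sq (hπ : ∑ a, π a = 1) (X : α → ℝ) (hX : ∑ a, π a * X a = 0) :
    ∑ x : ι → α, (∏ i, π (x i)) * (∑ k, X (x k)) ^ 2 =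
      Fintype.card ι * ∑ a, π a * X a ^ 2 := by
  calc ∑ x : ι → α, (∏ i, π (x i)) * (∑ k, X (x k)) ^ 2
      = ∑ k, ∑ l, ∑ x : ι → α, (∏ i, π (x i)) * (X (x k) * X (x l)) := by
        simp_rw [sq, sum_mul_sum, mul_sum]
        rw [sum_comm]
        exact sum_congr rfl fun k _ => sum_comm
    _ = ∑ k : ι, ∑ l : ι, if k = l then ∑ a, π a * X a ^ 2 else 0 := by
        refine sum_congr rfl fun k _ => sum_congr rfl fun l _ => ?_
        split_ifs with hkl
        · subst hkl
          simp_rw [← sq]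
          exact sum_prod_weight_mul_apply hπ k (fun a => X a ^ 2)
        · rw [sum_prod_weight_mul_apply_mul_apply hπ hkl, hX, zero_mul]
    _ = Fintype.card ι * ∑ a, π a * X a ^ 2 := by simp

end ProductWeight

section CenteredIndicator

variable {α : Type*} [Fintype α] [DecidableEq α] {π : α → ℝ}

lemma sum_mul_indicator_sub (hπ : ∑ a, π a = 1) (b : α) :
    ∑ a, π a * ((if a = b then 1 else 0) - π b) = 0 := by
  simp [mul_sub, ← sum_mul, hπ]

lemma sum_mul_indicator_sub_sq (hπ : ∑ a, π a = 1) (b : α) :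
    ∑ a, π a * ((if a = b then 1 else 0) - π b) ^ 2 = π b * (1 - π b) := by
  have h : ∀ a, ((if a = b then (1 : ℝ) else 0) - π b) ^ 2 =
      (1 - 2 * π b) * (if a = b then 1 else 0) + π b ^ 2 := by
    intro a; split_ifs <;> ring
  simp only [h, mul_add, sum_add_distrib, ← sum_mul, hπ,
    mul_ite, mul_one, mul_zero, sum_ite_eq', mem_univ, if_true]
  ring

end CenteredIndicator

lemma abs_sub_marg {Θ : Type*} [Fintype Θ] [DecidableEq Θ] {K : ℕ} (hK : K ≠ 0)
    (π : Θ → ℝ) (x : Fin K → Θ) (θ' : Θ) :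
    |π θ' - marg K x θ'| = |∑ k, ((if x k = θ' then 1 else 0) - π θ')| / K := by
  have h : π θ' - marg K x θ' = -(∑ k, ((if x k = θ' then 1 else 0) - π θ')) / K := by
    simp only [marg, card_filter, sum_sub_distrib, sum_const, card_univ, Fintype.card_fin,
      nsmul_eq_mul]
    push_cast
    field_simp
    ring
  rw [h, abs_div, abs_neg, Nat.abs_cast]

lemma sum_prod_weight_mul_abs_sub_marg_le {Θ : Type*} [Fintype Θ] [DecidableEq Θ]
    {π : Θ → ℝ} (hπ : IsProbVec π) {K : ℕ} (hK : K ≠ 0) (θ' : Θ) :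
    ∑ x : Fin K → Θ, (∏ k, π (x k)) * |π θ' - marg K x θ'| ≤
      √(π θ' * (1 - π θ')) / √K := by
  have hW : ∀ x : Fin K → Θ, 0 ≤ ∏ k, π (x k) := fun x => prod_nonneg fun k _ => hπ.1 _
  have hK' : (0 : ℝ) < K := Nat.cast_pos.mpr (Nat.pos_of_ne_zero hK)
  calc ∑ x : Fin K → Θ, (∏ k, π (x k)) * |π θ' - marg K x θ'|
      = (∑ x : Fin K → Θ, (∏ k, π (x k)) *
          |∑ k, ((if x k = θ' then 1 else 0) - π θ')|) / K := by
        simp_rw [abs_sub_marg hK, mul_div_assoc', sum_div]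
    _ ≤ √(∑ x : Fin K → Θ, (∏ k, π (x k)) *
          (∑ k, ((if x k = θ' then 1 else 0) - π θ')) ^ 2) / K := by
        gcongr
        exact sum_mul_abs_le_sqrt_sum_mul_sq _ (fun x _ => hW x) (sum_prod_weight hπ.2)
    _ = √(π θ' * (1 - π θ')) / √K := by
        rw [sum_prod_weight_mul_sum_sq hπ.2 _ (sum_mul_indicator_sub hπ.2 θ'),
          sum_mul_indicator_sub_sq hπ.2, Fintype.card_fin, Real.sqrt_mul hK'.le,
          div_eq_div_iff hK'.ne' (Real.sqrt_pos.mpr hK').ne', mul_right_comm,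
          Real.mul_self_sqrt hK'.le]
        ring

theorem expected_tv_empirical_bound {Θ : Type*} [Fintype Θ]
    [DecidableEq Θ]
    (π : Θ → ℝ) (hπ : IsProbVec π) (K : ℕ) (hK : 1 ≤ K) :
    ∑ θv : Fin K → Θ, (∏ k, π (θv k)) * tv π (marg K θv) ≤
      (1 / (2 * Real.sqrt K)) * ∑ θ', Real.sqrt (π θ' * (1 - π θ')) := by
  calc ∑ θv : Fin K → Θ, (∏ k, π (θv k)) * tv π (marg K θv)
      = (∑ θ', ∑ θv : Fin K → Θ, (∏ k, π (θv k)) * |π θ' - marg K θv θ'|) / 2 := by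
        simp_rw [tv, mul_div_assoc', ← sum_div, mul_sum]
        rw [sum_comm]
    _ ≤ (∑ θ', √(π θ' * (1 - π θ')) / √K) / 2 := by
        gcongr with θ'
        exact sum_prod_weight_mul_abs_sub_marg_le hπ (by omega) θ'
    _ = (1 / (2 * √K)) * ∑ θ', √(π θ' * (1 - π θ')) := by
        rw [← sum_div]
        ring
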